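/- arXiv:1909.06774 — 8 statements merged into one kernel-verified Lean document; each statement's English description precedes it below -/
import Mathlib

section
/- Let G be an n×n (n ≥ 2) irreducible and aperiodic matrix with nonnegative entries and Perron eigenvalue Λ₁(G). Then for every index i, the determinant of the matrix obtained from Λ₁(G)·I − G by deleting the i-th row and i-th column is strictly positive. -/
/-- The spectral radius (Perron eigenvalue for nonnegative irreducible matrices)
of a real square matrix: the supremum of the moduli of its complex eigenvalues. -/
noncomputable def specRad {m : Type*} [Fintype m] [DecidableEq m]
    (G : Matrix m m ℝ) : ℝ :=
  sSup {r : ℝ | ∃ μ ∈ spectrum ℂ (G.map (Complex.ofReal)), r = ‖μ‖}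

/-!
Write `H` for the principal submatrix of `G` obtained by deleting row and column `i`, and `ρ` for
the spectral radius of `G`. The determinant in question is the characteristic polynomial of `H`
at `ρ`; since that polynomial is monic, if it were `≤ 0` at `ρ` then `H` would have a real
eigenvalue `t ≥ ρ` with an eigenvector `v`. Padding `|v|` by a zero in position `i` gives
`w ≥ 0`, `w ≠ 0` with `t • w ≤ G *ᵥ w`. Because `G ^ k` is entrywise positive while `w i = 0`,
`w` is not an eigenvector, so `u = G ^ k *ᵥ w` is strictly positive and `t • u < G *ᵥ u`
componentwise; hence `c • u ≤ G *ᵥ u` for some `c > t`. Iterating, `‖G ^ m‖` grows at least like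
`c ^ m`, and Gelfand's formula gives `c ≤ ρ`, contradicting `c > t ≥ ρ`.
-/

open Filter Topology Matrix

theorem Polynomial.exists_isRoot_ge_of_eval_nonpos {p : Polynomial ℝ} (hdeg : 0 < p.degree)
    (hlead : 0 ≤ p.leadingCoeff) {a : ℝ} (ha : p.eval a ≤ 0) : ∃ t, a ≤ t ∧ p.IsRoot t := by
  obtain ⟨b, hb, hab⟩ := ((p.tendsto_atTop_of_leadingCoeff_nonneg hdeg hlead).eventually_ge_atTop 0
    |>.and (eventually_ge_atTop a)).exists
  obtain ⟨t, ht, hroot⟩ := intermediate_value_Icc hab p.continuous.continuousOn ⟨ha, hb⟩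
  exact ⟨t, ht.1, hroot⟩

theorem exists_gt_forall_mul_lt {ι : Type*} [Finite ι] {a b : ι → ℝ} {t : ℝ}
    (h : ∀ j, t * a j < b j) : ∃ c, t < c ∧ ∀ j, c * a j < b j := by
  have hnear : ∀ j, ∀ᶠ c in 𝓝[>] t, c * a j < b j := fun j =>
    ((continuous_mul_const (a j)).tendsto t).eventually (gt_mem_nhds (h j)) |>.filter_mono
      nhdsWithin_le_nhds
  exact ((eventually_all.2 hnear).and self_mem_nhdsWithin).exists.imp fun c hc => ⟨hc.2, hc.1⟩

theorem spectrum.ofReal_le_spectralRadius_of_le_norm_pow {A : Type*} [NormedRing A]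
    [NormedAlgebra ℂ A] [CompleteSpace A] (a : A) {β c : ℝ} (hβ : 0 < β) (hc : 0 ≤ c)
    (h : ∀ m : ℕ, β * c ^ m ≤ ‖a ^ m‖) : ENNReal.ofReal c ≤ spectralRadius ℂ a := by
  have hroot : Tendsto (fun m : ℕ => β ^ (1 / m : ℝ) * c) atTop (𝓝 c) := by
    simpa using ((Real.continuousAt_const_rpow hβ.ne').tendsto.comp
      tendsto_one_div_atTop_nhds_zero_nat).mul_const c
  refine le_of_tendsto_of_tendsto (ENNReal.tendsto_ofReal hroot)
    (spectrum.pow_norm_pow_one_div_tendsto_nhds_spectralRadius a) ?_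
  filter_upwards [eventually_ne_atTop 0] with m hm
  refine ENNReal.ofReal_le_ofReal ?_
  calc β ^ (1 / m : ℝ) * c = (β * c ^ m) ^ (1 / m : ℝ) := by
        rw [Real.mul_rpow hβ.le (by positivity), one_div, Real.pow_rpow_inv_natCast hc hm]
    _ ≤ ‖a ^ m‖ ^ (1 / m : ℝ) := by gcongr; exact h m

namespace Matrix

variable {l m : Type*} [Fintype m]

theorem mulVec_le_mulVec {A : Matrix l m ℝ} (hA : ∀ i j, 0 ≤ A i j) {x y : m → ℝ} (h : x ≤ y) :
    A *ᵥ x ≤ A *ᵥ y := fun i =>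
  Finset.sum_le_sum fun j _ => mul_le_mul_of_nonneg_left (h j) (hA i j)

theorem mulVec_pos {A : Matrix l m ℝ} (hA : ∀ i j, 0 < A i j) {x : m → ℝ} (hx : 0 ≤ x)
    (hx0 : x ≠ 0) (i : l) : 0 < (A *ᵥ x) i := by
  obtain ⟨j, hj⟩ := Function.ne_iff.1 hx0
  exact Finset.sum_pos' (fun j _ => mul_nonneg (hA i j).le (hx j))
    ⟨j, Finset.mem_univ j, mul_pos (hA i j) ((hx j).lt_of_ne' hj)⟩

theorem smul_abs_le_mulVec_abs {M : Matrix m m ℝ} (hM : ∀ i j, 0 ≤ M i j) {t : ℝ} {v : m → ℝ}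
    (hv : M *ᵥ v = t • v) : t • |v| ≤ M *ᵥ |v| := fun a =>
  calc t * |v a| ≤ |t * v a| := by
        rw [abs_mul]; exact mul_le_mul_of_nonneg_right (le_abs_self t) (abs_nonneg _)
    _ = |∑ b, M a b * v b| := by rw [← smul_eq_mul, ← Pi.smul_apply, ← hv]; rfl
    _ ≤ ∑ b, M a b * |v b| := (Finset.abs_sum_le_sum_abs _ _).trans_eq <|
        Finset.sum_congr rfl fun b _ => by rw [abs_mul, abs_of_nonneg (hM a b)]

theorem mulVec_insertNth_zero {n : ℕ} (G : Matrix l (Fin (n + 1)) ℝ) (i : Fin (n + 1))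
    (x : Fin n → ℝ) : G *ᵥ i.insertNth 0 x = G.submatrix id i.succAbove *ᵥ x := by
  ext j
  simp [mulVec, dotProduct, Fin.sum_univ_succAbove _ i]

theorem smul_insertNth_le_mulVec {n : ℕ} {G : Matrix (Fin (n + 1)) (Fin (n + 1)) ℝ}
    (hG : ∀ i j, 0 ≤ G i j) (i : Fin (n + 1)) {t : ℝ} {x : Fin n → ℝ} (hx : 0 ≤ x)
    (h : t • x ≤ G.submatrix i.succAbove i.succAbove *ᵥ x) :
    t • (i.insertNth 0 x : Fin (n + 1) → ℝ) ≤ G *ᵥ i.insertNth 0 x := by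
  rw [mulVec_insertNth_zero]
  intro j
  induction j using Fin.succAboveCases i with
  | x => simpa using mulVec_le_mulVec (A := G.submatrix id i.succAbove) (fun _ _ => hG _ _) hx i
  | p a => rw [Pi.smul_apply, Fin.insertNth_apply_succAbove]; exact h a

variable [DecidableEq m]

theorem pow_mulVec_eq_pow_smul {R : Type*} [CommSemiring R] {A : Matrix m m R} {t : R}
    {v : m → R} (h : A *ᵥ v = t • v) (k : ℕ) : A ^ k *ᵥ v = t ^ k • v := by
  induction k with
  | zero => simp
  | succ k ih => rw [pow_succ, ← mulVec_mulVec, h, mulVec_smul, ih, smul_smul, ← pow_succ']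

theorem pow_smul_le_pow_mulVec {A : Matrix m m ℝ} (hA : ∀ i j, 0 ≤ A i j) {c : ℝ} (hc : 0 ≤ c)
    {u : m → ℝ} (h : c • u ≤ A *ᵥ u) (k : ℕ) : c ^ k • u ≤ A ^ k *ᵥ u := by
  induction k with
  | zero => simp
  | succ k ih =>
    calc c ^ (k + 1) • u = c ^ k • (c • u) := by rw [pow_succ, mul_smul]
      _ ≤ c ^ k • (A *ᵥ u) := smul_le_smul_of_nonneg_left h (pow_nonneg hc k)
      _ = A *ᵥ (c ^ k • u) := by rw [mulVec_smul]
      _ ≤ A *ᵥ (A ^ k *ᵥ u) := mulVec_le_mulVec hA ih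
      _ = A ^ (k + 1) *ᵥ u := by rw [mulVec_mulVec, pow_succ']

theorem exists_eigenvector_ge_of_det_nonpos [Nonempty m] {M : Matrix m m ℝ} {a : ℝ}
    (h : (a • 1 - M).det ≤ 0) : ∃ t, a ≤ t ∧ ∃ v ≠ 0, M *ᵥ v = t • v := by
  have hdet (x : ℝ) : M.charpoly.eval x = (x • 1 - M).det := by
    rw [eval_charpoly, smul_one_eq_diagonal, scalar_apply]
  obtain ⟨t, hat, ht⟩ := M.charpoly.exists_isRoot_ge_of_eval_nonpos
    (by rw [charpoly_degree_eq_dim]; exact_mod_cast Fintype.card_pos)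
    (M.charpoly_monic.leadingCoeff ▸ zero_le_one) (hdet a ▸ h)
  obtain ⟨v, hv0, hv⟩ := exists_mulVec_eq_zero_iff.2 ((hdet t).symm.trans ht)
  refine ⟨t, hat, v, hv0, ?_⟩
  rwa [sub_mulVec, smul_mulVec, one_mulVec, sub_eq_zero, eq_comm] at hv

theorem exists_pos_smul_lt_mulVec {G : Matrix m m ℝ} {k : ℕ} (hk : ∀ i j, 0 < (G ^ k) i j)
    {t : ℝ} {w : m → ℝ} (hw : 0 ≤ w) (hw0 : w ≠ 0) {i : m} (hwi : w i = 0)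
    (htw : t • w ≤ G *ᵥ w) : ∃ u : m → ℝ, (∀ j, 0 < u j) ∧ ∀ j, t * u j < (G *ᵥ u) j := by
  have hne : G *ᵥ w ≠ t • w := fun heig => by
    simpa [pow_mulVec_eq_pow_smul heig, hwi] using mulVec_pos hk hw hw0 i
  refine ⟨G ^ k *ᵥ w, mulVec_pos hk hw hw0, fun j => ?_⟩
  have hcomm : G *ᵥ (G ^ k *ᵥ w) - t • (G ^ k *ᵥ w) = G ^ k *ᵥ (G *ᵥ w - t • w) := by
    rw [mulVec_sub, mulVec_mulVec, mulVec_mulVec, ← pow_succ, ← pow_succ', mulVec_smul]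
  have hpos := mulVec_pos hk (sub_nonneg.2 htw) (sub_ne_zero.2 hne) j
  rwa [← hcomm, Pi.sub_apply, Pi.smul_apply, smul_eq_mul, sub_pos] at hpos

end Matrix

section specRad

variable {m : Type*} [Fintype m] [DecidableEq m]

theorem specRad_nonneg (G : Matrix m m ℝ) : 0 ≤ specRad G :=
  Real.sSup_nonneg <| by rintro _ ⟨μ, -, rfl⟩; exact norm_nonneg μ

theorem norm_le_specRad {G : Matrix m m ℝ} {μ : ℂ}
    (hμ : μ ∈ spectrum ℂ (G.map Complex.ofReal)) : ‖μ‖ ≤ specRad G :=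
  le_csSup (((finite_spectrum _).image (‖·‖)).bddAbove.mono
    (by rintro _ ⟨μ, hμ, rfl⟩; exact ⟨μ, hμ, rfl⟩)) ⟨μ, hμ, rfl⟩

theorem le_specRad_of_ofReal_le_spectralRadius {G : Matrix m m ℝ} {c : ℝ}
    (h : ENNReal.ofReal c ≤ spectralRadius ℂ (G.map Complex.ofReal)) : c ≤ specRad G := by
  refine (ENNReal.ofReal_le_ofReal_iff (specRad_nonneg G)).1 (h.trans (iSup₂_le fun μ hμ => ?_))
  rw [← ENNReal.ofReal_coe_nnreal, coe_nnnorm]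
  exact ENNReal.ofReal_le_ofReal (norm_le_specRad hμ)

attribute [local instance] Matrix.linftyOpNormedRing Matrix.linftyOpNormedAlgebra

theorem linfty_opNorm_map_ofReal (A : Matrix m m ℝ) : ‖A.map Complex.ofReal‖ = ‖A‖ := by
  simp [linfty_opNorm_def]

theorem le_specRad_of_smul_le_mulVec [Nonempty m] {A : Matrix m m ℝ} (hA : ∀ i j, 0 ≤ A i j)
    {u : m → ℝ} (hu : ∀ j, 0 < u j) {c : ℝ} (hc : c • u ≤ A *ᵥ u) : c ≤ specRad A := by
  rcases le_or_gt c 0 with hc0 | hc0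
  · exact hc0.trans (specRad_nonneg A)
  obtain ⟨j⟩ := ‹Nonempty m›
  have hu_norm : 0 < ‖u‖ := (hu j).trans_le ((Real.le_norm_self _).trans (norm_le_pi_norm u j))
  refine le_specRad_of_ofReal_le_spectralRadius <|
    spectrum.ofReal_le_spectralRadius_of_le_norm_pow _ (div_pos (hu j) hu_norm) hc0.le fun k => ?_
  rw [show A.map Complex.ofReal ^ k = (A ^ k).map Complex.ofReal from
    (A.map_pow Complex.ofRealHom k).symm, linfty_opNorm_map_ofReal]
  calc u j / ‖u‖ * c ^ k = c ^ k * u j / ‖u‖ := by ring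
    _ ≤ (A ^ k *ᵥ u) j / ‖u‖ := by gcongr; exact pow_smul_le_pow_mulVec hA hc0.le hc k j
    _ ≤ ‖A ^ k *ᵥ u‖ / ‖u‖ := by gcongr; exact (Real.le_norm_self _).trans (norm_le_pi_norm _ j)
    _ ≤ ‖A ^ k‖ := div_le_of_le_mul₀ hu_norm.le (norm_nonneg _) (linfty_opNorm_mulVec _ _)

end specRad

/-- Let `G` be an `n×n` (`n ≥ 2`) irreducible aperiodic (i.e. primitive) matrix with
nonnegative entries and Perron eigenvalue `Λ₁(G) = specRad G`.  Then for every index `i`,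
the determinant of the matrix obtained from `Λ₁(G)·I − G` by deleting the `i`-th row and
`i`-th column is strictly positive. -/
theorem perron_minor_det_pos (n : ℕ) (G : Matrix (Fin (n + 2)) (Fin (n + 2)) ℝ)
    (hnonneg : ∀ i j, 0 ≤ G i j)
    (hprim : ∃ k : ℕ, ∀ i j, 0 < (G ^ k) i j) :
    ∀ i : Fin (n + 2),
      0 < ((specRad G • (1 : Matrix (Fin (n + 2)) (Fin (n + 2)) ℝ) - G).submatrix
        i.succAbove i.succAbove).det := by
  intro i
  obtain ⟨k, hk⟩ := hprim
  simp only [submatrix_sub, submatrix_smul, Pi.sub_apply, Pi.smul_apply,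
    submatrix_one _ Fin.succAbove_right_injective]
  by_contra! hdet
  obtain ⟨t, hlt, v, hv0, hv⟩ := exists_eigenvector_ge_of_det_nonpos hdet
  set w : Fin (n + 2) → ℝ := i.insertNth 0 |v|
  have hw : 0 ≤ w := Fin.le_insertNth_iff.2 ⟨le_rfl, abs_nonneg v⟩
  have hw0 : w ≠ 0 := by
    rw [Ne, ← Pi.single_zero i, ← Fin.insertNth_zero_right, Fin.insertNth_inj]
    exact fun h => hv0 (by simpa using h.2)
  have htw : t • w ≤ G *ᵥ w := smul_insertNth_le_mulVec hnonneg i (abs_nonneg v)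
    (smul_abs_le_mulVec_abs (fun _ _ => hnonneg _ _) hv)
  obtain ⟨u, hu, htu⟩ := exists_pos_smul_lt_mulVec hk hw hw0 (Fin.insertNth_apply_same ..) htw
  obtain ⟨c, htc, hcu⟩ := exists_gt_forall_mul_lt htu
  exact (hlt.trans_lt htc).not_ge (le_specRad_of_smul_le_mulVec hnonneg hu fun j => (hcu j).le)
end

section
/- Let G be an irreducible aperiodic stochastic (transition) matrix. Then the row vector whose i-th component equals det((I − G)^{i,i}) is a left eigenvector of G for the eigenvalue 1, and it is unique up to scaling by a positive number. -/
open Matrix Finset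

section Aux

variable {n : ℕ} {G : Matrix (Fin (n + 1)) (Fin (n + 1)) ℝ}

private lemma pow_entry_nonneg (hnonneg : ∀ i j, 0 ≤ G i j) (k : ℕ) :
    ∀ i j, 0 ≤ (G ^ k) i j := by
  induction k with
  | zero => intro i j; by_cases h : i = j <;> simp [Matrix.one_apply, h]
  | succ k ih =>
    intro i j
    rw [pow_succ, Matrix.mul_apply]
    exact Finset.sum_nonneg fun m _ => mul_nonneg (ih i m) (hnonneg m j)

private lemma pow_rowsum (hstoch : ∀ i, ∑ j, G i j = 1) (k : ℕ) :
    ∀ i, ∑ j, (G ^ k) i j = 1 := by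
  induction k with
  | zero => intro i; simp [Matrix.one_apply]
  | succ k ih =>
    intro i
    simp only [pow_succ, Matrix.mul_apply]
    rw [Finset.sum_comm]
    calc ∑ m, ∑ j, (G ^ k) i m * G m j
        = ∑ m, (G ^ k) i m * ∑ j, G m j := by
          simp [Finset.mul_sum]
      _ = 1 := by simp [hstoch, ih i]

private lemma fixed_of_sub_mulVec {x : Fin (n + 1) → ℝ} (h : (1 - G) *ᵥ x = 0) :
    G *ᵥ x = x := by
  have h1 := Matrix.sub_mulVec (1 : Matrix (Fin (n + 1)) (Fin (n + 1)) ℝ) G x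
  rw [h, Matrix.one_mulVec] at h1
  exact (sub_eq_zero.mp h1.symm).symm

private lemma fixed_of_sub_vecMul {x : Fin (n + 1) → ℝ} (h : x ᵥ* (1 - G) = 0) :
    x ᵥ* G = x := by
  have h1 := Matrix.vecMul_sub (1 : Matrix (Fin (n + 1)) (Fin (n + 1)) ℝ) G x
  rw [h, Matrix.vecMul_one] at h1
  exact (sub_eq_zero.mp h1.symm).symm

/-- Any right 1-eigenvector of a primitive stochastic matrix is constant. -/
private lemma fixed_const (hnonneg : ∀ i j, 0 ≤ G i j) (hstoch : ∀ i, ∑ j, G i j = 1)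
    (hprim : ∃ k : ℕ, ∀ i j, 0 < (G ^ k) i j) (x : Fin (n + 1) → ℝ)
    (hx : G *ᵥ x = x) : ∀ j l, x j = x l := by
  obtain ⟨k, hk⟩ := hprim
  have hpowall : ∀ p : ℕ, (G ^ p) *ᵥ x = x := by
    intro p
    induction p with
    | zero => simp
    | succ p ih =>
      rw [pow_succ', ← Matrix.mulVec_mulVec, ih, hx]
  have hpow : (G ^ k) *ᵥ x = x := hpowall k
  -- maximum principle
  have key : ∀ i, (∀ j, x j ≤ x i) → ∀ j, x j = x i := by
    intro i hi j
    have hsum : ∑ l, (G ^ k) i l * (x i - x l) = 0 := by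
      have h1 : ∑ l, (G ^ k) i l * x i = x i := by
        rw [← Finset.sum_mul, pow_rowsum hstoch k i, one_mul]
      have h2 : ∑ l, (G ^ k) i l * x l = x i := by
        have := congrFun hpow i
        simpa [Matrix.mulVec, dotProduct] using this
      simp [mul_sub, Finset.sum_sub_distrib, h1, h2]
    have hterm : ∀ l ∈ Finset.univ, (0:ℝ) ≤ (G ^ k) i l * (x i - x l) :=
      fun l _ => mul_nonneg (le_of_lt (hk i l)) (sub_nonneg.2 (hi l))
    have := (Finset.sum_eq_zero_iff_of_nonneg hterm).1 hsum j (Finset.mem_univ j)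
    have hne : (G ^ k) i j ≠ 0 := ne_of_gt (hk i j)
    have : x i - x j = 0 := by
      rcases mul_eq_zero.1 this with h | h
      · exact absurd h hne
      · exact h
    linarith
  obtain ⟨i, _, hi⟩ := Finset.exists_max_image Finset.univ x ⟨0, Finset.mem_univ 0⟩
  intro j l
  rw [key i (fun j => hi j (Finset.mem_univ j)) j, key i (fun j => hi j (Finset.mem_univ j)) l]

/-- Maximum principle for a vector fixed by `G` except at coordinate `i`, vanishing at `i`. -/
private lemma max_principle (hnonneg : ∀ i j, 0 ≤ G i j) (hstoch : ∀ i, ∑ j, G i j = 1)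
    (hprim : ∃ k : ℕ, ∀ i j, 0 < (G ^ k) i j) (i : Fin (n + 1)) (y : Fin (n + 1) → ℝ)
    (hyi : y i = 0) (hy : ∀ j, j ≠ i → (G *ᵥ y) j = y j) : ∀ j, y j ≤ 0 := by
  obtain ⟨k, hk⟩ := hprim
  by_contra hcon
  push_neg at hcon
  obtain ⟨m0, _, hm0⟩ := Finset.exists_max_image Finset.univ y ⟨0, Finset.mem_univ 0⟩
  obtain ⟨j0, hj0⟩ := hcon
  have hMpos : 0 < y m0 := lt_of_lt_of_le hj0 (hm0 j0 (Finset.mem_univ j0))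
  set S : Set (Fin (n + 1)) := {j | y j = y m0} with hS
  have hiS : i ∉ S := by
    intro h
    rw [Set.mem_setOf_eq] at h
    rw [hyi] at h
    linarith
  have hstep : ∀ j ∈ S, ∀ l, 0 < G j l → l ∈ S := by
    intro j hj l hl
    have hjne : j ≠ i := fun h => hiS (h ▸ hj)
    have hjy : y j = y m0 := hj
    have heq : ∑ l, G j l * y l = y j := by
      have := hy j hjne
      simpa [Matrix.mulVec, dotProduct] using this
    have hsum : ∑ l, G j l * (y m0 - y l) = 0 := by
      have h1 : ∑ l, G j l * y m0 = y m0 := by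
        rw [← Finset.sum_mul, hstoch j, one_mul]
      simp [mul_sub, Finset.sum_sub_distrib, h1, heq, hjy]
    have hterm : ∀ l ∈ Finset.univ, (0:ℝ) ≤ G j l * (y m0 - y l) :=
      fun l _ => mul_nonneg (hnonneg j l) (sub_nonneg.2 (hm0 l (Finset.mem_univ l)))
    have := (Finset.sum_eq_zero_iff_of_nonneg hterm).1 hsum l (Finset.mem_univ l)
    rcases mul_eq_zero.1 this with h | h
    · exact absurd h (ne_of_gt hl)
    · have : y l = y m0 := by linarith
      exact this
  have hsteps : ∀ p : ℕ, ∀ j ∈ S, ∀ l, 0 < (G ^ p) j l → l ∈ S := by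
    intro p
    induction p with
    | zero =>
      intro j hj l hl
      by_cases h : j = l
      · exact h ▸ hj
      · simp [Matrix.one_apply, h] at hl
    | succ p ih =>
      intro j hj l hl
      rw [pow_succ, Matrix.mul_apply] at hl
      obtain ⟨m, _, hm⟩ : ∃ m ∈ Finset.univ, 0 < (G ^ p) j m * G m l := by
        by_contra hno
        push_neg at hno
        have : ∑ m, (G ^ p) j m * G m l ≤ 0 :=
          Finset.sum_nonpos fun m hmm => hno m hmm
        linarith
      have h1 : 0 < (G ^ p) j m := by
        rcases lt_or_ge 0 ((G ^ p) j m) with h | h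
        · exact h
        · have : (G ^ p) j m = 0 := le_antisymm h (pow_entry_nonneg hnonneg p j m)
          rw [this, zero_mul] at hm; exact absurd hm (lt_irrefl 0)
      have h2 : 0 < G m l := by
        rcases lt_or_ge 0 (G m l) with h | h
        · exact h
        · have : G m l = 0 := le_antisymm h (hnonneg m l)
          rw [this, mul_zero] at hm; exact absurd hm (lt_irrefl 0)
      exact hstep m (ih j hj m h1) l h2
  have : i ∈ S := hsteps k m0 rfl i (hk m0 i)
  exact hiS this

/-- Each principal minor of `1 - G` is nonsingular. -/
private lemma minor_det_ne_zero (hnonneg : ∀ i j, 0 ≤ G i j) (hstoch : ∀ i, ∑ j, G i j = 1)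
    (hprim : ∃ k : ℕ, ∀ i j, 0 < (G ^ k) i j) (i : Fin (n + 1)) :
    ((1 - G).submatrix i.succAbove i.succAbove).det ≠ 0 := by
  intro hdet
  obtain ⟨x, hxne, hx⟩ := (Matrix.exists_mulVec_eq_zero_iff).2 hdet
  set y : Fin (n + 1) → ℝ := Fin.insertNth i 0 x with hy
  have hyi : y i = 0 := by rw [hy]; simp
  have hysucc : ∀ l, y (i.succAbove l) = x l := by
    intro l; rw [hy]; simp
  have hfix : ∀ j, j ≠ i → (G *ᵥ y) j = y j := by
    intro j hj
    have h0 : ((1 - G) *ᵥ y) j = 0 := by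
      obtain ⟨l0, hl0⟩ := Fin.exists_succAbove_eq hj
      have hcalc : ((1 - G) *ᵥ y) j
          = (1 - G) j i * y i + ∑ l, (1 - G) j (i.succAbove l) * y (i.succAbove l) := by
        simp only [Matrix.mulVec, dotProduct]
        exact Fin.sum_univ_succAbove (fun m => (1 - G) j m * y m) i
      rw [hcalc, hyi, mul_zero, zero_add]
      have : ∑ l, (1 - G) j (i.succAbove l) * y (i.succAbove l)
          = (((1 - G).submatrix i.succAbove i.succAbove) *ᵥ x) l0 := by
        rw [← hl0]
        simp [Matrix.mulVec, dotProduct, Matrix.submatrix_apply, hysucc]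
      rw [this, hx]
      rfl
    have h1 := congrFun (Matrix.sub_mulVec (1 : Matrix (Fin (n+1)) (Fin (n+1)) ℝ) G y) j
    rw [h0] at h1
    rw [Matrix.one_mulVec] at h1
    have h2 : y j - (G *ᵥ y) j = 0 := by
      have := h1.symm
      rw [Pi.sub_apply] at this
      simpa using this
    linarith
  have hle : ∀ j, y j ≤ 0 := max_principle hnonneg hstoch hprim i y hyi hfix
  have hge : ∀ j, (-y) j ≤ 0 := by
    apply max_principle hnonneg hstoch hprim i (-y)
    · simp [hyi]
    · intro j hj
      rw [Matrix.mulVec_neg, Pi.neg_apply, hfix j hj, Pi.neg_apply]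
  have hy0 : y = 0 := by
    funext j
    have := hge j
    rw [Pi.neg_apply] at this
    have := hle j
    have := hge j
    simp only [Pi.neg_apply] at this
    have h1 := hle j
    have h2 := hge j
    simp only [Pi.neg_apply] at h2
    have : y j = 0 := le_antisymm h1 (by linarith)
    simpa using this
  apply hxne
  funext l
  have := congrFun hy0 (i.succAbove l)
  rw [hysucc l] at this
  simpa using this

end Aux

/-- Let `G` be an irreducible aperiodic (primitive) stochastic matrix.  Then the row
vector whose `i`-th component equals `det((I − G)^{i,i})` (the minor of `I − G` obtained
by deleting row `i` and column `i`) is a left eigenvector of `G` for the eigenvalue `1`,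
and it is unique up to (nonzero) scaling. -/
theorem left_eigenvector_minor_det (n : ℕ) (G : Matrix (Fin (n + 1)) (Fin (n + 1)) ℝ)
    (hnonneg : ∀ i j, 0 ≤ G i j) (hstoch : ∀ i, ∑ j, G i j = 1)
    (hprim : ∃ k : ℕ, ∀ i j, 0 < (G ^ k) i j) :
    Matrix.vecMul
        (fun i => ((1 - G).submatrix i.succAbove i.succAbove).det) G
      = (fun i => ((1 - G).submatrix i.succAbove i.succAbove).det) ∧
    ∀ w : Fin (n + 1) → ℝ, w ≠ 0 → Matrix.vecMul w G = w →
      ∃ t : ℝ, t ≠ 0 ∧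
        w = t • (fun i => ((1 - G).submatrix i.succAbove i.succAbove).det) := by
  set A : Matrix (Fin (n + 1)) (Fin (n + 1)) ℝ := 1 - G with hA
  set v : Fin (n + 1) → ℝ := fun i => (A.submatrix i.succAbove i.succAbove).det with hv
  -- the all-ones vector is in the kernel of A
  have hones : A *ᵥ (fun _ => (1:ℝ)) = 0 := by
    funext i
    simp only [Matrix.mulVec, dotProduct, mul_one, hA, Matrix.sub_apply, Pi.zero_apply]
    rw [Finset.sum_sub_distrib, hstoch i]
    simp [Matrix.one_apply]
  have honesne : (fun _ => (1:ℝ) : Fin (n + 1) → ℝ) ≠ 0 := by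
    intro h
    have := congrFun h 0
    simp at this
  have hdetA : A.det = 0 :=
    Matrix.exists_mulVec_eq_zero_iff.1 ⟨_, honesne, hones⟩
  -- adjugate diagonal equals the minor vector
  have hdiag : ∀ i, A.adjugate i i = v i := by
    intro i
    rw [Matrix.adjugate_fin_succ_eq_det_submatrix]
    have : ((-1:ℝ)) ^ ((i:ℕ) + (i:ℕ)) = 1 := Even.neg_one_pow ⟨i, rfl⟩
    rw [this, one_mul]
  -- A * adjugate A = 0, so columns of adjugate are right 1-eigenvectors 
  have hmuladj : A * A.adjugate = 0 := by
    rw [Matrix.mul_adjugate, hdetA, zero_smul]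
  have hcols : ∀ i j, A.adjugate i j = v j := by
    intro i j
    have hcol : G *ᵥ (fun m => A.adjugate m j) = fun m => A.adjugate m j := by
      have h0 : (1 - G) *ᵥ (fun m => A.adjugate m j) = 0 := by
        rw [← hA]
        funext l
        have := congrFun (congrFun hmuladj l) j
        simpa [Matrix.mul_apply, Matrix.mulVec, dotProduct] using this
      exact fixed_of_sub_mulVec h0
    have := fixed_const hnonneg hstoch hprim _ hcol i j
    rw [this, hdiag j]
  -- existence: v is a left eigenvector
  have hvA : Matrix.vecMul v A = 0 := by
    funext j
    have : Matrix.vecMul v A j = (A.adjugate * A) 0 j := by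
      simp only [Matrix.vecMul, dotProduct, Matrix.mul_apply]
      exact Finset.sum_congr rfl fun i _ => by rw [hcols 0 i]
    rw [this, Matrix.adjugate_mul, hdetA, zero_smul]
    rfl
  have hveig : Matrix.vecMul v G = v := by
    apply fixed_of_sub_vecMul
    rw [← hA]; exact hvA
  refine ⟨hveig, ?_⟩
  -- uniqueness
  intro w hwne hweig
  have hvne : v ≠ 0 := by
    intro h
    exact minor_det_ne_zero hnonneg hstoch hprim 0 (congrFun h 0)
  -- kernel of A = span of ones, so has finrank 1
  have hker : LinearMap.ker A.mulVecLin
      = Submodule.span ℝ {(fun _ => (1:ℝ) : Fin (n + 1) → ℝ)} := by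
    apply le_antisymm
    · intro x hx
      rw [LinearMap.mem_ker, Matrix.mulVecLin_apply] at hx
      have hGx : G *ᵥ x = x := by
        apply fixed_of_sub_mulVec
        rw [← hA]; exact hx
      have hc := fixed_const hnonneg hstoch hprim x hGx
      rw [Submodule.mem_span_singleton]
      exact ⟨x 0, by funext j; simp [hc 0 j]⟩
    · rw [Submodule.span_singleton_le_iff_mem, LinearMap.mem_ker, Matrix.mulVecLin_apply]
      exact hones
  have hkerA : Module.finrank ℝ (LinearMap.ker A.mulVecLin) = 1 := by
    rw [hker]
    exact finrank_span_singleton honesne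
  have hrankA : A.rank = n := by
    have := LinearMap.finrank_range_add_finrank_ker A.mulVecLin
    rw [hkerA, Module.finrank_fintype_fun_eq_card, Fintype.card_fin] at this
    have : A.rank + 1 = n + 1 := this
    omega
  have hkerT : Module.finrank ℝ (LinearMap.ker Aᵀ.mulVecLin) = 1 := by
    have h1 := LinearMap.finrank_range_add_finrank_ker Aᵀ.mulVecLin
    rw [Module.finrank_fintype_fun_eq_card, Fintype.card_fin] at h1
    have h2 : Aᵀ.rank = n := by rw [Matrix.rank_transpose, hrankA]
    have h3 : Aᵀ.rank + Module.finrank ℝ (LinearMap.ker Aᵀ.mulVecLin) = n + 1 := h1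
    omega
  -- both v and w lie in ker Aᵀ
  have hmem : ∀ u : Fin (n + 1) → ℝ, Matrix.vecMul u G = u → u ∈ LinearMap.ker Aᵀ.mulVecLin := by
    intro u hu
    rw [LinearMap.mem_ker, Matrix.mulVecLin_apply, Matrix.mulVec_transpose]
    have h1 := Matrix.vecMul_sub (1 : Matrix (Fin (n+1)) (Fin (n+1)) ℝ) G u
    rw [Matrix.vecMul_one, hu, sub_self] at h1
    rw [hA]
    exact h1
  have hvK : v ∈ LinearMap.ker Aᵀ.mulVecLin := hmem v hveig
  have hwK : w ∈ LinearMap.ker Aᵀ.mulVecLin := hmem w hweig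
  have hspan : Submodule.span ℝ {v} = LinearMap.ker Aᵀ.mulVecLin := by
    apply Submodule.eq_of_le_of_finrank_eq
    · rw [Submodule.span_singleton_le_iff_mem]; exact hvK
    · rw [finrank_span_singleton hvne, hkerT]
  have hwmem : w ∈ Submodule.span ℝ ({v} : Set (Fin (n + 1) → ℝ)) := hspan ▸ hwK
  obtain ⟨t, ht⟩ := Submodule.mem_span_singleton.1 hwmem
  refine ⟨t, ?_, ht.symm⟩
  intro h0
  apply hwne
  rw [← ht, h0, zero_smul]
end

section
/- Let (Y, M) be the Markov-modulated random walk on (ℤ × ℤ₊) × 𝓜 with increments (−1,0), (1,1), (0,−1) occurring with probabilities λ(M_k)P(M_k,M_k), μ₁(M_k)P(M_k,M_k), μ₂(M_k)P(M_k,M_k) (and increment (0,0) with probability 1 − P(M_k,M_k), in which case M jumps according to P). For (β, α, d) with A(β,α)d = d, where A(β,α) is the matrix with off-diagonal entries P(m₁,m₂) and diagonal entries P(m,m)(λ(m)/β + μ₁(m)α + μ₂(m)β/α), the function h(y,m) = β^{y(1)−y(2)} α^{y(2)} d(m) satisfies E_{(y,m)}[h(Y₁, M₁)] = h(y,m) for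 all y ∈ ℤ × ℤ₊ with y(2) > 0. -/
/-- The characteristic matrix `A(β,α)` of the Markov-modulated tandem walk: off-diagonal
entries `P(m₁,m₂)`, diagonal entries `P(m,m)(λ(m)/β + μ₁(m)α + μ₂(m)β/α)`. -/
noncomputable def charMatC {M : Type*} [Fintype M] [DecidableEq M]
    (P : Matrix M M ℝ) (lam mu1 mu2 : M → ℝ) (β α : ℂ) : Matrix M M ℂ :=
  fun m1 m2 => if m1 = m2
    then (P m1 m1 : ℂ) * ((lam m1 : ℂ) / β + (mu1 m1 : ℂ) * α + (mu2 m1 : ℂ) * β / α)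
    else (P m1 m2 : ℂ)

/-- One-step expectation `E_{(y,m)}[h(Y₁,M₁)]` for the Markov-modulated walk `(Y,M)` on
`ℤ × ℤ₊`: with probability `P(m,m')` (`m' ≠ m`) the modulating chain jumps and `Y` stays
put; with probability `P(m,m)λ(m)`, `P(m,m)μ₁(m)`, `P(m,m)μ₂(m)` the increments
`(−1,0)`, `(1,1)`, `(0,−1)` occur, the last one being suppressed on the boundary
`y(2) = 0`. -/
noncomputable def stepExpC {M : Type*} [Fintype M] [DecidableEq M]
    (P : Matrix M M ℝ) (lam mu1 mu2 : M → ℝ)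
    (h : ℤ × ℤ → M → ℂ) (y : ℤ × ℤ) (m : M) : ℂ :=
  (∑ m' : M, if m' = m then 0 else (P m m' : ℂ) * h y m') +
    (P m m : ℂ) * ((lam m : ℂ) * h (y.1 - 1, y.2) m
      + (mu1 m : ℂ) * h (y.1 + 1, y.2 + 1) m
      + (mu2 m : ℂ) * h (if y.2 = 0 then y else (y.1, y.2 - 1)) m)

/-- The exponential function `h(y,m) = β^{y(1)−y(2)} α^{y(2)} d(m)`. -/
noncomputable def expFun {M : Type*} (β α : ℂ) (d : M → ℂ) (y : ℤ × ℤ) (m : M) : ℂ :=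
  β ^ (y.1 - y.2) * α ^ y.2 * d m

section

variable {M : Type*} (β α : ℂ) (d : M → ℂ) (y : ℤ × ℤ) (m : M)

theorem expFun_fst_sub_one (hβ : β ≠ 0) :
    expFun β α d (y.1 - 1, y.2) m = β⁻¹ * expFun β α d y m := by
  simp only [expFun, show y.1 - 1 - y.2 = (y.1 - y.2) - 1 by ring, zpow_sub_one₀ hβ]
  ring

theorem expFun_add_one_add_one (hα : α ≠ 0) :
    expFun β α d (y.1 + 1, y.2 + 1) m = α * expFun β α d y m := by
  simp only [expFun, show y.1 + 1 - (y.2 + 1) = y.1 - y.2 by ring, zpow_add_one₀ hα]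
  ring

theorem expFun_snd_sub_one (hβ : β ≠ 0) (hα : α ≠ 0) :
    expFun β α d (y.1, y.2 - 1) m = β * α⁻¹ * expFun β α d y m := by
  simp only [expFun, show y.1 - (y.2 - 1) = (y.1 - y.2) + 1 by ring, zpow_add_one₀ hβ,
    zpow_sub_one₀ hα]
  ring

end

section

variable {M : Type*} [Fintype M] [DecidableEq M] (P : Matrix M M ℝ) (lam mu1 mu2 : M → ℝ)
  (β α : ℂ) (d : M → ℂ) (m : M)

theorem charMatC_mulVec_apply :
    (charMatC P lam mu1 mu2 β α).mulVec d m =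
      (∑ m' : M, if m' = m then 0 else (P m m' : ℂ) * d m') +
        (P m m : ℂ) * ((lam m : ℂ) / β + (mu1 m : ℂ) * α + (mu2 m : ℂ) * β / α) * d m := by
  have hsplit : ∀ m', charMatC P lam mu1 mu2 β α m m' * d m' =
      (if m' = m then 0 else (P m m' : ℂ) * d m') +
        if m' = m then charMatC P lam mu1 mu2 β α m m * d m else 0 := by
    intro m'
    by_cases h : m' = m
    · simp [h]
    · simp [h, charMatC, Ne.symm h]
  rw [Matrix.mulVec, dotProduct, Finset.sum_congr rfl fun m' _ => hsplit m',
    Finset.sum_add_distrib, Finset.sum_ite_eq' Finset.univ m, if_pos (Finset.mem_univ m), charMatC,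
    if_pos rfl]

/-- At an interior point the step leaves `y` unconstrained, so each increment multiplies
`expFun` by the corresponding factor of the diagonal of `A(β,α)`. -/
theorem stepExpC_expFun_of_snd_ne_zero (hβ : β ≠ 0) (hα : α ≠ 0) {y : ℤ × ℤ} (hy : y.2 ≠ 0) :
    stepExpC P lam mu1 mu2 (expFun β α d) y m =
      β ^ (y.1 - y.2) * α ^ y.2 * (charMatC P lam mu1 mu2 β α).mulVec d m := by
  rw [stepExpC, if_neg hy, expFun_fst_sub_one β α d y m hβ, expFun_add_one_add_one β α d y m hα,
    expFun_snd_sub_one β α d y m hβ hα, charMatC_mulVec_apply,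
    mul_add (β ^ (y.1 - y.2) * α ^ y.2), Finset.mul_sum]
  congr 1
  · refine Finset.sum_congr rfl fun m' _ => ?_
    split_ifs
    · rw [mul_zero]
    · simp only [expFun]
      ring
  · simp only [expFun]
    ring

end

theorem interior_harmonic_general {M : Type*} [Fintype M] [DecidableEq M]
    (P : Matrix M M ℝ)
    (lam mu1 mu2 : M → ℝ)
    (β α : ℂ) (hβ : β ≠ 0) (hα : α ≠ 0)
    (d : M → ℂ)
    (heig : (charMatC P lam mu1 mu2 β α).mulVec d = d) :
    ∀ (y : ℤ × ℤ) (m : M), 0 < y.2 →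
      stepExpC P lam mu1 mu2 (expFun β α d) y m = expFun β α d y m := by
  intro y m hy
  rw [stepExpC_expFun_of_snd_ne_zero P lam mu1 mu2 β α d m hβ hα hy.ne', heig]
  rfl

/-- If `(β, α, d)` satisfies the characteristic equation `A(β,α) d = d`, then the
function `h(y,m) = β^{y(1)−y(2)} α^{y(2)} d(m)` is `(Y,M)`-harmonic at every interior
point `y` with `y(2) > 0`: `E_{(y,m)}[h(Y₁,M₁)] = h(y,m)`. -/
theorem interior_harmonic {M : Type*} [Fintype M] [DecidableEq M] [Nonempty M]
    (P : Matrix M M ℝ)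
    (hP0 : ∀ m1 m2, 0 ≤ P m1 m2) (hP1 : ∀ m1, ∑ m2, P m1 m2 = 1)
    (hprim : ∃ k : ℕ, ∀ m1 m2, 0 < (P ^ k) m1 m2)
    (lam mu1 mu2 : M → ℝ)
    (hrates : ∀ m, 0 < lam m ∧ 0 < mu1 m ∧ 0 < mu2 m ∧ lam m + mu1 m + mu2 m = 1)
    (β α : ℂ) (hβ : β ≠ 0) (hα : α ≠ 0)
    (d : M → ℂ) (hd : d ≠ 0)
    (heig : (charMatC P lam mu1 mu2 β α).mulVec d = d) :
    ∀ (y : ℤ × ℤ) (m : M), 0 < y.2 →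
      stepExpC P lam mu1 mu2 (expFun β α d) y m = expFun β α d y m :=
  interior_harmonic_general P lam mu1 mu2 β α hβ hα d heig
end

section
/- In the setting of the Markov-modulated walk (Y, M) on ℤ × ℤ₊, suppose (β, α, d) satisfies both A(β,α)d = d and A₂(β,α)d = d, where A₂ differs from A only in its diagonal entries, which equal P(m,m)(λ(m)/β + μ₁(m)α + μ₂(m)). Then h(y,m) = β^{y(1)−y(2)} α^{y(2)} d(m) satisfies E_{(y,m)}[h(Y₁,M₁)] = h(y,m) for all (y,m) ∈ (ℤ × ℤ₊) × 𝓜, including boundary points with y(2) = 0. -/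
/-- Boundary characteristic matrix `A₂(β,α)`: diagonal entries
`P(m,m)(λ(m)/β + μ₁(m)α + μ₂(m))`, same off-diagonal entries. -/
noncomputable def charMat2C {M : Type*} [Fintype M] [DecidableEq M]
    (P : Matrix M M ℝ) (lam mu1 mu2 : M → ℝ) (β α : ℂ) : Matrix M M ℂ :=
  fun m1 m2 => if m1 = m2
    then (P m1 m1 : ℂ) * ((lam m1 : ℂ) / β + (mu1 m1 : ℂ) * α + (mu2 m1 : ℂ))
    else (P m1 m2 : ℂ)

/-- If `(β,α,d)` satisfies both `A(β,α)d = d` and `A₂(β,α)d = d`, then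
`h(y,m) = β^{y(1)−y(2)} α^{y(2)} d(m)` satisfies `E_{(y,m)}[h(Y₁,M₁)] = h(y,m)` at every
point of `ℤ × ℤ₊`, including boundary points with `y(2) = 0`. -/
theorem harmonic_everywhere {M : Type*} [Fintype M] [DecidableEq M] [Nonempty M]
    (P : Matrix M M ℝ)
    (hP0 : ∀ m1 m2, 0 ≤ P m1 m2) (hP1 : ∀ m1, ∑ m2, P m1 m2 = 1)
    (hprim : ∃ k : ℕ, ∀ m1 m2, 0 < (P ^ k) m1 m2)
    (lam mu1 mu2 : M → ℝ)
    (hrates : ∀ m, 0 < lam m ∧ 0 < mu1 m ∧ 0 < mu2 m ∧ lam m + mu1 m + mu2 m = 1)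
    (β α : ℂ) (hβ : β ≠ 0) (hα : α ≠ 0)
    (d : M → ℂ) (hd : d ≠ 0)
    (heig : (charMatC P lam mu1 mu2 β α).mulVec d = d)
    (heig2 : (charMat2C P lam mu1 mu2 β α).mulVec d = d) :
    ∀ (y : ℤ × ℤ) (m : M), 0 ≤ y.2 →
      stepExpC P lam mu1 mu2 (expFun β α d) y m = expFun β α d y m := by

  intro y m _
  set c : ℂ := β ^ (y.1 - y.2) * α ^ y.2 with hc
  have hA := congrFun heig m
  have hA2 := congrFun heig2 m
  simp only [Matrix.mulVec, dotProduct, charMatC, charMat2C] at hA hA2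
  have split : ∀ a : ℂ,
      (∑ m' : M, (if m = m' then a else (P m m' : ℂ)) * d m')
        = a * d m + ∑ m' : M, (if m' = m then 0 else (P m m' : ℂ) * d m') := by
    intro a
    have h1 : ∀ m' : M, (if m = m' then a else (P m m' : ℂ)) * d m'
        = (if m' = m then a * d m' else 0)
          + (if m' = m then 0 else (P m m' : ℂ) * d m') := by
      intro m'
      by_cases h : m' = m
      · subst h; simp
      · have h2 : m ≠ m' := fun h' => h h'.symm
        simp [h, h2]
    simp_rw [h1, Finset.sum_add_distrib, Finset.sum_ite_eq' Finset.univ m]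
    simp
  rw [split] at hA hA2
  set S : ℂ := ∑ m' : M, (if m' = m then 0 else (P m m' : ℂ) * d m') with hS
  have sumEq : (∑ m' : M, if m' = m then 0 else (P m m' : ℂ) * expFun β α d y m')
      = c * S := by
    rw [hS, Finset.mul_sum]
    refine Finset.sum_congr rfl fun m' _ => ?_
    by_cases h : m' = m
    · simp [h]
    · simp only [h, if_false, expFun, ← hc]; ring
  have e1 : expFun β α d (y.1 - 1, y.2) m = c * β⁻¹ * d m := by
    simp only [expFun]
    rw [show y.1 - 1 - y.2 = (y.1 - y.2) + (-1) by ring, zpow_add₀ hβ, zpow_neg_one, hc]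
    ring
  have e2 : expFun β α d (y.1 + 1, y.2 + 1) m = c * α * d m := by
    simp only [expFun]
    rw [show y.1 + 1 - (y.2 + 1) = y.1 - y.2 by ring, zpow_add₀ hα, zpow_one]
    rw [hc]; ring
  have hyy : expFun β α d y m = c * d m := by
    simp only [expFun, ← hc]
  by_cases hb : y.2 = 0
  · rw [stepExpC, sumEq, if_pos hb, e1, e2, hyy]
    push_cast at hA2 ⊢
    linear_combination c * hA2
  · have e3 : expFun β α d (y.1, y.2 - 1) m = c * (β * α⁻¹) * d m := by
      simp only [expFun]
      rw [show y.1 - (y.2 - 1) = (y.1 - y.2) + 1 by ring, zpow_add₀ hβ, zpow_one,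
        show y.2 - 1 = y.2 + (-1) by ring, zpow_add₀ hα, zpow_neg_one, hc]
      ring
    rw [stepExpC, sumEq, if_neg hb, e1, e2, e3, hyy]
    push_cast at hA ⊢
    linear_combination c * hA
end

section
/- In the setting of the Markov-modulated walk (Y, M) on ℤ × ℤ₊, if (β, α, d) satisfies A(β,α)d = d, then for every boundary point y with y(2) = 0 and every m, E_{(y,m)}[h(Y₁,M₁)] − h(y,m) = β^{y(1)} · P(m,m) μ₂(m) d(m) (1 − β/α), where h(y,m) = β^{y(1)−y(2)} α^{y(2)} d(m). -/
/-- If `(β,α,d)` satisfies `A(β,α)d = d`, then for every boundary point `y` with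
`y(2) = 0` and every `m`,
`E_{(y,m)}[h(Y₁,M₁)] − h(y,m) = β^{y(1)} · P(m,m) μ₂(m) d(m) (1 − β/α)`,
where `h(y,m) = β^{y(1)−y(2)} α^{y(2)} d(m)`. -/
theorem boundary_defect {M : Type*} [Fintype M] [DecidableEq M] [Nonempty M]
    (P : Matrix M M ℝ)
    (hP0 : ∀ m1 m2, 0 ≤ P m1 m2) (hP1 : ∀ m1, ∑ m2, P m1 m2 = 1)
    (hprim : ∃ k : ℕ, ∀ m1 m2, 0 < (P ^ k) m1 m2)
    (lam mu1 mu2 : M → ℝ)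
    (hrates : ∀ m, 0 < lam m ∧ 0 < mu1 m ∧ 0 < mu2 m ∧ lam m + mu1 m + mu2 m = 1)
    (β α : ℂ) (hβ : β ≠ 0) (hα : α ≠ 0)
    (d : M → ℂ)
    (heig : (charMatC P lam mu1 mu2 β α).mulVec d = d) :
    ∀ (y : ℤ × ℤ) (m : M), y.2 = 0 →
      stepExpC P lam mu1 mu2 (expFun β α d) y m - expFun β α d y m
        = β ^ y.1 * ((P m m : ℂ) * (mu2 m : ℂ) * d m * (1 - β / α)) := by
  rintro ⟨y1, y2⟩ m hy
  simp only at hy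
  subst hy
  have hmv := congrFun heig m
  simp only [Matrix.mulVec, dotProduct, charMatC] at hmv
  have h2 : (∑ m' : M, if m' = m then 0 else (P m m' : ℂ) * d m')
      + (P m m : ℂ) * ((lam m : ℂ) / β + (mu1 m : ℂ) * α + (mu2 m : ℂ) * β / α) * d m = d m := by
    have step1 : ((P m m : ℂ) * ((lam m : ℂ) / β + (mu1 m : ℂ) * α + (mu2 m : ℂ) * β / α) * d m)
        = ∑ m' : M, (if m' = m then (P m m : ℂ) * ((lam m : ℂ) / β + (mu1 m : ℂ) * α + (mu2 m : ℂ) * β / α) * d m' else 0) :=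
      ((Finset.sum_ite_eq' Finset.univ m _).trans (by simp)).symm
    rw [step1, ← Finset.sum_add_distrib, ← hmv]
    refine Finset.sum_congr rfl (fun m' _ => ?_)
    by_cases h : m' = m
    · subst h; simp
    · rw [if_neg h, if_neg h, if_neg (fun hh => h hh.symm), add_zero]
  have hmv' : (∑ m' : M, if m' = m then 0 else (P m m' : ℂ) * d m')
      = d m - (P m m : ℂ) * ((lam m : ℂ) / β + (mu1 m : ℂ) * α + (mu2 m : ℂ) * β / α) * d m :=
    eq_sub_of_add_eq h2
  simp only [stepExpC, expFun]
  have e1 : y1 + 1 - ((0:ℤ) + 1) = y1 := by ring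
  have e2 : y1 + 1 - (1:ℤ) = y1 := by ring
  simp only [e1, e2, sub_zero, zpow_zero, zpow_one, mul_one, ite_true, if_pos rfl, zero_add]
  rw [show (∑ x : M, if x = m then 0 else (P m x : ℂ) * (β ^ y1 * d x))
      = β ^ y1 * ∑ m' : M, (if m' = m then 0 else (P m m' : ℂ) * d m') by
    rw [Finset.mul_sum]; exact Finset.sum_congr rfl (fun m' _ => by by_cases h : m' = m <;> simp [h] <;> ring)]
  rw [hmv']
  have hb : β ^ (y1 - 1) = β ^ y1 / β := by
    rw [zpow_sub₀ hβ, zpow_one]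
  rw [hb]
  field_simp
  ring
end

section
/- Suppose (β, αⱼ, dⱼ), j = 1,…,k, are points with A(β,αⱼ)dⱼ = dⱼ (all with the same β), and suppose b ∈ ℂ^k is a nonzero vector with Σⱼ b(j) c(β,αⱼ,dⱼ) = 0, where c(β,α,d)(m) = P(m,m)μ₂(m)d(m)(1 − β/α). Then h = Σⱼ b(j) β^{y(1)−y(2)} αⱼ^{y(2)} dⱼ(m) satisfies E_{(y,m)}[h(Y₁,M₁)] = h(y,m) for all (y,m) ∈ (ℤ × ℤ₊) × 𝓜. -/
/-- The boundary defect vector `c(β,α,d)(m) = P(m,m) μ₂(m) d(m) (1 − β/α)`. -/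
noncomputable def cVec {M : Type*} (P : Matrix M M ℝ) (mu2 : M → ℝ)
    (β α : ℂ) (d : M → ℂ) (m : M) : ℂ :=
  (P m m : ℂ) * (mu2 m : ℂ) * d m * (1 - β / α)

lemma single_harmonic {M : Type*} [Fintype M] [DecidableEq M]
    (P : Matrix M M ℝ) (lam mu1 mu2 : M → ℝ)
    (β α : ℂ) (hβ : β ≠ 0) (hα : α ≠ 0) (d : M → ℂ)
    (heig : (charMatC P lam mu1 mu2 β α).mulVec d = d) (y : ℤ × ℤ) (m : M) :
    stepExpC P lam mu1 mu2 (expFun β α d) y m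
      = expFun β α d y m + (if y.2 = 0 then β ^ y.1 * cVec P mu2 β α d m else 0) := by
  obtain ⟨y1, y2⟩ := y
  have key : ∑ m2, charMatC P lam mu1 mu2 β α m m2 * d m2 = d m := by
    have := congrFun heig m
    rwa [Matrix.mulVec, dotProduct] at this
  have hterm : ∀ m2, charMatC P lam mu1 mu2 β α m m2 * d m2
      = (if m2 = m then (P m m : ℂ) * ((lam m : ℂ) / β + (mu1 m : ℂ) * α + (mu2 m : ℂ) * β / α) * d m else 0)
        + (if m2 = m then 0 else (P m m2 : ℂ) * d m2) := by
    intro m2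
    by_cases h : m2 = m <;> simp [charMatC, h, eq_comm]
    simp [Ne.symm h]
  have hS : ∑ m2, (if m2 = m then 0 else (P m m2 : ℂ) * d m2)
      = d m - (P m m : ℂ) * ((lam m : ℂ) / β + (mu1 m : ℂ) * α + (mu2 m : ℂ) * β / α) * d m := by
    have := key
    rw [Finset.sum_congr rfl fun m2 _ => hterm m2, Finset.sum_add_distrib,
      Finset.sum_ite_eq' Finset.univ m] at this
    simp only [Finset.mem_univ, if_true] at this
    linear_combination this
  set B := β ^ (y1 - y2) * α ^ y2 with hBdef
  have hB : ∑ m' : M, (if m' = m then 0 else (P m m' : ℂ) * expFun β α d (y1, y2) m')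
      = B * (d m - (P m m : ℂ) * ((lam m : ℂ) / β + (mu1 m : ℂ) * α + (mu2 m : ℂ) * β / α) * d m) := by
    rw [← hS, Finset.mul_sum]
    refine Finset.sum_congr rfl fun x _ => ?_
    by_cases hx : x = m <;> simp [hx, expFun, hBdef] <;> ring
  have e1 : expFun β α d (y1 - 1, y2) m = B * β⁻¹ * d m := by
    rw [expFun, hBdef]
    have : y1 - 1 - y2 = (y1 - y2) - 1 := by ring
    rw [this, zpow_sub_one₀ hβ]; ring
  have e2 : expFun β α d (y1 + 1, y2 + 1) m = B * α * d m := by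
    rw [expFun, hBdef]
    have : y1 + 1 - (y2 + 1) = y1 - y2 := by ring
    rw [this, zpow_add_one₀ hα]; ring
  have e0 : expFun β α d (y1, y2) m = B * d m := rfl
  by_cases h0 : y2 = 0
  · subst h0
    have hBy : B = β ^ y1 := by rw [hBdef]; simp
    rw [stepExpC]
    simp only
    rw [if_pos trivial, if_pos trivial, hB, e1, e2, e0, cVec, hBy]
    field_simp
    ring
  · have e3 : expFun β α d (y1, y2 - 1) m = B * β * α⁻¹ * d m := by
      rw [expFun, hBdef]
      have : y1 - (y2 - 1) = (y1 - y2) + 1 := by ring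
      rw [this, zpow_add_one₀ hβ, zpow_sub_one₀ hα]; ring
    rw [stepExpC]
    simp only
    rw [if_neg h0, if_neg h0, hB, e1, e2, e0, e3]
    field_simp
    ring

lemma stepExpC_sum {M : Type*} [Fintype M] [DecidableEq M]
    (P : Matrix M M ℝ) (lam mu1 mu2 : M → ℝ) (k : ℕ)
    (b : Fin k → ℂ) (h : Fin k → ℤ × ℤ → M → ℂ) (y : ℤ × ℤ) (m : M) :
    stepExpC P lam mu1 mu2 (fun y' m' => ∑ j, b j * h j y' m') y m
      = ∑ j, b j * stepExpC P lam mu1 mu2 (h j) y m := by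
  simp only [stepExpC, Finset.mul_sum, mul_ite, mul_zero, mul_add, Finset.sum_add_distrib]
  rw [Finset.sum_comm]
  congr 1
  · refine Finset.sum_congr rfl fun x _ => ?_
    by_cases hx : x = m
    · simp [hx]
    · simp only [if_neg hx, Finset.mul_sum]
      exact Finset.sum_congr rfl fun j _ => by ring
  · simp only [← Finset.sum_add_distrib]
    refine Finset.sum_congr rfl fun j _ => ?_
    ring

/-- Suppose `(β, αⱼ, dⱼ)`, `j = 1,…,k`, satisfy `A(β,αⱼ)dⱼ = dⱼ` (all with the same `β`)
and `b ∈ ℂᵏ` is a nonzero vector with `Σⱼ b(j) c(β,αⱼ,dⱼ) = 0`.  Then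
`h(y,m) = Σⱼ b(j) β^{y(1)−y(2)} αⱼ^{y(2)} dⱼ(m)` satisfies
`E_{(y,m)}[h(Y₁,M₁)] = h(y,m)` for all `(y,m) ∈ (ℤ × ℤ₊) × 𝓜`. -/
theorem linear_combination_harmonic {M : Type*} [Fintype M] [DecidableEq M] [Nonempty M]
    (P : Matrix M M ℝ)
    (hP0 : ∀ m1 m2, 0 ≤ P m1 m2) (hP1 : ∀ m1, ∑ m2, P m1 m2 = 1)
    (hprim : ∃ n : ℕ, ∀ m1 m2, 0 < (P ^ n) m1 m2)
    (lam mu1 mu2 : M → ℝ)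
    (hrates : ∀ m, 0 < lam m ∧ 0 < mu1 m ∧ 0 < mu2 m ∧ lam m + mu1 m + mu2 m = 1)
    (k : ℕ) (β : ℂ) (hβ : β ≠ 0)
    (αs : Fin k → ℂ) (hαs : ∀ j, αs j ≠ 0)
    (ds : Fin k → M → ℂ)
    (heig : ∀ j, (charMatC P lam mu1 mu2 β (αs j)).mulVec (ds j) = ds j)
    (b : Fin k → ℂ) (hb : b ≠ 0)
    (hcancel : ∀ m, ∑ j, b j * cVec P mu2 β (αs j) (ds j) m = 0) :
    ∀ (y : ℤ × ℤ) (m : M), 0 ≤ y.2 →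
      stepExpC P lam mu1 mu2 (fun y' m' => ∑ j, b j * expFun β (αs j) (ds j) y' m') y m
        = ∑ j, b j * expFun β (αs j) (ds j) y m := by
  intro y m _
  rw [stepExpC_sum]
  rw [Finset.sum_congr rfl fun j _ => by
    rw [single_harmonic P lam mu1 mu2 β (αs j) hβ (hαs j) (ds j) (heig j) y m]]
  simp only [mul_add, Finset.sum_add_distrib]
  have hzero : ∑ j, b j * (if y.2 = 0 then β ^ y.1 * cVec P mu2 β (αs j) (ds j) m else 0) = 0 := by
    by_cases h0 : y.2 = 0
    · simp only [h0, if_true]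
      have : ∑ j, b j * (β ^ y.1 * cVec P mu2 β (αs j) (ds j) m)
          = β ^ y.1 * ∑ j, b j * cVec P mu2 β (αs j) (ds j) m := by
        rw [Finset.mul_sum]; exact Finset.sum_congr rfl fun j _ => by ring
      rw [this, hcancel m, mul_zero]
    · simp [h0]
  rw [hzero, add_zero]
end

section
/- Let X be the constrained tandem walk on ℤ₊² and X̄ the walk with identical increments but constrained only on the boundary {x(2) = 0} (the first coordinate may go negative), both driven by the same increment sequence and started at the same point. Let σ_{1,2} be the first time X hits {x(2)=0} after having hit {x(1)=0}. Then X_k(1) + X_k(2) = X̄_k(1) + X̄_k(2) for all k ≤ σ_{1,2}. -/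
/-- Constraining map of the tandem walk `X` on `ℤ₊²`: an increment is suppressed if it
would take the walk out of `ℤ₊²`. -/
def stepX (x v : ℤ × ℤ) : ℤ × ℤ :=
  if 0 ≤ x.1 + v.1 ∧ 0 ≤ x.2 + v.2 then (x.1 + v.1, x.2 + v.2) else x

/-- Constraining map of the walk `X̄` on `ℤ × ℤ₊`: only increments that would make the
second coordinate negative are suppressed (the first coordinate may go negative). -/
def stepXbar (x v : ℤ × ℤ) : ℤ × ℤ :=
  if 0 ≤ x.2 + v.2 then (x.1 + v.1, x.2 + v.2) else x

/-- The constrained tandem walk driven by the increment sequence `I`. -/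
def Xseq (x0 : ℤ × ℤ) (I : ℕ → ℤ × ℤ) : ℕ → ℤ × ℤ
  | 0 => x0
  | k + 1 => stepX (Xseq x0 I k) (I k)

/-- The partially constrained walk driven by the same increment sequence. -/
def Xbarseq (x0 : ℤ × ℤ) (I : ℕ → ℤ × ℤ) : ℕ → ℤ × ℤ
  | 0 => x0
  | k + 1 => stepXbar (Xbarseq x0 I k) (I k)

/-- One-step comparison of second coordinates. -/
lemma step_le (a b v : ℤ × ℤ) (ha1 : 0 ≤ a.1) (ha2 : 0 ≤ a.2) (hb2 : 0 ≤ b.2)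
    (hv : v = (1,0) ∨ v = (-1,1) ∨ v = (0,-1) ∨ v = (0,0))
    (hle : a.2 ≤ b.2) : (stepX a v).2 ≤ (stepXbar b v).2 := by
  obtain ⟨a1, a2⟩ := a; obtain ⟨b1, b2⟩ := b
  rcases hv with rfl | rfl | rfl | rfl <;>
    simp only [stepX, stepXbar] at * <;> split <;> split <;> simp_all <;> omega

/-- One step on equal states either keeps the walks equal or the first coordinate is `0`. -/
lemma step_eq (a v : ℤ × ℤ) (ha1 : 0 ≤ a.1) (ha2 : 0 ≤ a.2)
    (hv : v = (1,0) ∨ v = (-1,1) ∨ v = (0,-1) ∨ v = (0,0)) :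
    stepX a v = stepXbar a v ∨ a.1 = 0 := by
  obtain ⟨a1, a2⟩ := a
  rcases hv with rfl | rfl | rfl | rfl <;>
    simp only [stepX, stepXbar] at * <;> (try split) <;> (try split) <;> simp_all <;> omega

/-- One-step preservation of the equality of coordinate sums. -/
lemma step_sum (a b v : ℤ × ℤ) (ha1 : 0 ≤ a.1) (ha2 : 0 ≤ a.2) (hb2 : 0 ≤ b.2)
    (hle : a.2 ≤ b.2) (h0 : a.2 = 0 → b.2 = 0)
    (hv : v = (1,0) ∨ v = (-1,1) ∨ v = (0,-1) ∨ v = (0,0))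
    (hsum : a.1 + a.2 = b.1 + b.2) :
    (stepX a v).1 + (stepX a v).2 = (stepXbar b v).1 + (stepXbar b v).2 := by
  obtain ⟨a1, a2⟩ := a; obtain ⟨b1, b2⟩ := b
  rcases hv with rfl | rfl | rfl | rfl <;>
    simp only [stepX, stepXbar] at * <;> split <;> split <;> simp_all <;> omega

/-- `X` stays in the nonnegative quadrant. -/
lemma Xseq_nonneg (x0 : ℤ × ℤ) (hx1 : 0 ≤ x0.1) (hx2 : 0 ≤ x0.2) (I : ℕ → ℤ × ℤ) :
    ∀ k, 0 ≤ (Xseq x0 I k).1 ∧ 0 ≤ (Xseq x0 I k).2 := by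
  intro k
  induction k with
  | zero => exact ⟨hx1, hx2⟩
  | succ k ih =>
    simp only [Xseq, stepX]
    split
    · next h => exact h
    · exact ih

/-- The second coordinate of `X̄` stays nonnegative. -/
lemma Xbarseq_nonneg2 (x0 : ℤ × ℤ) (hx2 : 0 ≤ x0.2) (I : ℕ → ℤ × ℤ) :
    ∀ k, 0 ≤ (Xbarseq x0 I k).2 := by
  intro k
  induction k with
  | zero => exact hx2
  | succ k ih =>
    simp only [Xbarseq, stepXbar]
    split
    · next h => exact h
    · exact ih

/-- Key coupling invariant: `X₂ ≤ X̄₂` always, and the two walks coincide until `X`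
first visits `{x(1) = 0}`. -/
lemma key_invariant (x0 : ℤ × ℤ) (hx1 : 0 ≤ x0.1) (hx2 : 0 ≤ x0.2) (I : ℕ → ℤ × ℤ)
    (hI : ∀ k, I k ∈ ({(1, 0), (-1, 1), (0, -1), (0, 0)} : Set (ℤ × ℤ))) :
    ∀ k, (Xseq x0 I k).2 ≤ (Xbarseq x0 I k).2 ∧
      (Xseq x0 I k = Xbarseq x0 I k ∨ ∃ i ≤ k, (Xseq x0 I i).1 = 0) := by
  intro k
  induction k with
  | zero => exact ⟨le_refl _, Or.inl rfl⟩
  | succ k ih =>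
    obtain ⟨hle, hQ⟩ := ih
    have hX := Xseq_nonneg x0 hx1 hx2 I k
    have hXb := Xbarseq_nonneg2 x0 hx2 I k
    have hIk := hI k
    simp only [Set.mem_insert_iff, Set.mem_singleton_iff] at hIk
    refine ⟨step_le _ _ _ hX.1 hX.2 hXb hIk hle, ?_⟩
    rcases hQ with heq | ⟨i, hik, hi⟩
    · rcases step_eq (Xseq x0 I k) (I k) hX.1 hX.2 hIk with h | h
      · left
        show stepX (Xseq x0 I k) (I k) = stepXbar (Xbarseq x0 I k) (I k)
        rw [← heq]; exact h
      · exact Or.inr ⟨k, Nat.le_succ k, h⟩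
    · exact Or.inr ⟨i, le_trans hik (Nat.le_succ k), hi⟩

/-- Let `X` be the constrained tandem walk on `ℤ₊²` and `X̄` the walk with the same
increments constrained only on `{x(2) = 0}`, both driven by the same increment sequence
(with increments among `(1,0)`, `(−1,1)`, `(0,−1)`, `(0,0)`) and started at the same
point of `ℤ₊²`.  Then `X_k(1) + X_k(2) = X̄_k(1) + X̄_k(2)` for all
`k ≤ σ_{1,2}`, where `σ_{1,2}` is the first time `X` hits `{x(2) = 0}` after having hit
`{x(1) = 0}`; the condition `k ≤ σ_{1,2}` is expressed by saying that no `j < k` both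
comes after a visit of `X` to `{x(1)=0}` and satisfies `X_j(2) = 0`. -/
theorem sums_equal_until_sigma12 (x0 : ℤ × ℤ) (hx1 : 0 ≤ x0.1) (hx2 : 0 ≤ x0.2)
    (I : ℕ → ℤ × ℤ)
    (hI : ∀ k, I k ∈ ({(1, 0), (-1, 1), (0, -1), (0, 0)} : Set (ℤ × ℤ))) :
    ∀ k : ℕ,
      (∀ j < k, ¬((∃ i ≤ j, (Xseq x0 I i).1 = 0) ∧ (Xseq x0 I j).2 = 0)) →
      (Xseq x0 I k).1 + (Xseq x0 I k).2 = (Xbarseq x0 I k).1 + (Xbarseq x0 I k).2 := by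
  intro k
  induction k with
  | zero => intro _; rfl
  | succ k ih =>
    intro h
    have hsum := ih (fun j hj => h j (Nat.lt_succ_of_lt hj))
    have hX := Xseq_nonneg x0 hx1 hx2 I k
    have hXb := Xbarseq_nonneg2 x0 hx2 I k
    have hkey := key_invariant x0 hx1 hx2 I hI k
    have hIk := hI k
    simp only [Set.mem_insert_iff, Set.mem_singleton_iff] at hIk
    have hlast := h k (Nat.lt_succ_self k)
    have h0 : (Xseq x0 I k).2 = 0 → (Xbarseq x0 I k).2 = 0 := by
      intro h2
      rcases hkey.2 with heq | hex
      · rw [← heq]; exact h2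
      · exact absurd ⟨hex, h2⟩ hlast
    exact step_sum _ _ _ hX.1 hX.2 hXb hkey.1 h0 hIk hsum
end

section
/- In the setting of the Markov-modulated tandem walk, suppose (ρ₂, 1, d₂) satisfies A(ρ₂,1)d₂ = d₂ with ρ₂ ∈ (0,1) and d₂ strictly positive, and (ρ₂, α*, d*) satisfies A(ρ₂,α*)d* = d* with 0 < α* < ρ₂ and d* strictly positive. Then there exists c₀ > 0 such that h(y,m) = ρ₂^{y(1)−y(2)} d₂(m) + c₀ ρ₂^{y(1)−y(2)} (α*)^{y(2)} d*(m) is (Y,M)-superharmonic: E_{(y,m)}[h(Y₁,M₁)] ≤ h(y,m) for all (y,m) ∈ (ℤ × ℤ₊) × 𝓜. -/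
/-- Interior characteristic matrix `A(β,α)` (real version): diagonal entries
`P(m,m)(λ(m)/β + μ₁(m)α + μ₂(m)β/α)`, off-diagonal entries `P(m₁,m₂)`. -/
noncomputable def charMatR {M : Type*} [Fintype M] [DecidableEq M]
    (P : Matrix M M ℝ) (lam mu1 mu2 : M → ℝ) (β α : ℝ) : Matrix M M ℝ :=
  fun m1 m2 => if m1 = m2
    then P m1 m1 * (lam m1 / β + mu1 m1 * α + mu2 m1 * β / α)
    else P m1 m2

/-- One-step expectation `E_{(y,m)}[h(Y₁,M₁)]` for the Markov-modulated walk `(Y,M)`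
on `ℤ × ℤ₊`, the increment `(0,−1)` being suppressed on the boundary `y(2) = 0`. -/
noncomputable def stepExpR {M : Type*} [Fintype M] [DecidableEq M]
    (P : Matrix M M ℝ) (lam mu1 mu2 : M → ℝ)
    (h : ℤ × ℤ → M → ℝ) (y : ℤ × ℤ) (m : M) : ℝ :=
  (∑ m' : M, if m' = m then 0 else P m m' * h y m') +
    P m m * (lam m * h (y.1 - 1, y.2) m
      + mu1 m * h (y.1 + 1, y.2 + 1) m
      + mu2 m * h (if y.2 = 0 then y else (y.1, y.2 - 1)) m)

lemma interior_eq {M : Type*} [Fintype M] [DecidableEq M]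
    (P : Matrix M M ℝ) (lam mu1 mu2 : M → ℝ) (ρ α : ℝ) (hρ : ρ ≠ 0) (hα : α ≠ 0)
    (d : M → ℝ) (heig : (charMatR P lam mu1 mu2 ρ α).mulVec d = d) (y : ℤ × ℤ) (m : M) :
    (∑ m' : M, if m' = m then 0 else P m m' * (ρ ^ (y.1 - y.2) * α ^ y.2 * d m')) +
      P m m * (lam m * (ρ ^ (y.1 - 1 - y.2) * α ^ y.2 * d m)
        + mu1 m * (ρ ^ (y.1 + 1 - (y.2 + 1)) * α ^ (y.2 + 1) * d m)
        + mu2 m * (ρ ^ (y.1 - (y.2 - 1)) * α ^ (y.2 - 1) * d m))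
    = ρ ^ (y.1 - y.2) * α ^ y.2 * d m := by
  have h0 := congrFun heig m
  simp only [Matrix.mulVec, dotProduct, charMatR] at h0
  have hm : (∑ j : M, if j = m then 0 else P m j * d j)
      + P m m * (lam m / ρ + mu1 m * α + mu2 m * ρ / α) * d m = d m := by
    have hc : ∀ j ∈ Finset.univ, ((if j = m then 0 else P m j * d j)
        + (if j = m then P m m * (lam m / ρ + mu1 m * α + mu2 m * ρ / α) * d j else 0))
        = (if m = j then P m m * (lam m / ρ + mu1 m * α + mu2 m * ρ / α) else P m j) * d j := by
      intro j _
      by_cases h : j = m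
      · subst h; simp
      · simp [h, Ne.symm h]
    rw [← Finset.sum_congr rfl hc, Finset.sum_add_distrib,
      Finset.sum_ite_eq' Finset.univ m
        (fun j => P m m * (lam m / ρ + mu1 m * α + mu2 m * ρ / α) * d j)] at h0
    simpa using h0
  have e1 : ρ ^ (y.1 - 1 - y.2) = ρ ^ (y.1 - y.2) * ρ⁻¹ := by
    rw [show y.1 - 1 - y.2 = y.1 - y.2 - 1 by ring, zpow_sub_one₀ hρ]
  have e2 : ρ ^ (y.1 + 1 - (y.2 + 1)) = ρ ^ (y.1 - y.2) := by
    congr 1; ring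
  have e3 : ρ ^ (y.1 - (y.2 - 1)) = ρ ^ (y.1 - y.2) * ρ := by
    rw [show y.1 - (y.2 - 1) = y.1 - y.2 + 1 by ring, zpow_add_one₀ hρ]
  have e4 : α ^ (y.2 + 1) = α ^ y.2 * α := zpow_add_one₀ hα y.2
  have e5 : α ^ (y.2 - 1) = α ^ y.2 * α⁻¹ := zpow_sub_one₀ hα y.2
  have hS : (∑ m' : M, if m' = m then 0 else P m m' * (ρ ^ (y.1 - y.2) * α ^ y.2 * d m'))
      = ρ ^ (y.1 - y.2) * α ^ y.2 * ∑ j : M, (if j = m then 0 else P m j * d j) := by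
    rw [Finset.mul_sum]
    exact Finset.sum_congr rfl fun j _ => by split <;> ring
  rw [hS, e1, e2, e3, e4, e5]
  linear_combination (ρ ^ (y.1 - y.2) * α ^ y.2) * hm


/-- Suppose `(ρ₂, 1, d₂)` satisfies `A(ρ₂,1)d₂ = d₂` with `ρ₂ ∈ (0,1)` and `d₂ > 0`, and
`(ρ₂, α*, d*)` satisfies `A(ρ₂,α*)d* = d*` with `0 < α* < ρ₂` and `d* > 0`.  Then there
is `c₀ > 0` such that `h(y,m) = ρ₂^{y(1)−y(2)} d₂(m) + c₀ ρ₂^{y(1)−y(2)} (α*)^{y(2)} d*(m)`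
is `(Y,M)`-superharmonic: `E_{(y,m)}[h(Y₁,M₁)] ≤ h(y,m)` for all `(y,m)` with `y(2) ≥ 0`. -/
theorem superharmonic_from_conjugate_points {M : Type*} [Fintype M] [DecidableEq M]
    [Nonempty M]
    (P : Matrix M M ℝ)
    (hP0 : ∀ m1 m2, 0 ≤ P m1 m2) (hP1 : ∀ m1, ∑ m2, P m1 m2 = 1)
    (hprim : ∃ k : ℕ, ∀ m1 m2, 0 < (P ^ k) m1 m2)
    (lam mu1 mu2 : M → ℝ)
    (hrates : ∀ m, 0 < lam m ∧ 0 < mu1 m ∧ 0 < mu2 m ∧ lam m + mu1 m + mu2 m = 1)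
    (ρ₂ αst : ℝ) (hα0 : 0 < αst) (hαρ : αst < ρ₂) (hρ1 : ρ₂ < 1)
    (d₂ dst : M → ℝ) (hd₂ : ∀ m, 0 < d₂ m) (hdst : ∀ m, 0 < dst m)
    (heig2 : (charMatR P lam mu1 mu2 ρ₂ 1).mulVec d₂ = d₂)
    (heigst : (charMatR P lam mu1 mu2 ρ₂ αst).mulVec dst = dst) :
    ∃ c₀ : ℝ, 0 < c₀ ∧
      ∀ (y : ℤ × ℤ) (m : M), 0 ≤ y.2 →
        stepExpR P lam mu1 mu2
            (fun y' m' => ρ₂ ^ (y'.1 - y'.2) * d₂ m'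
              + c₀ * (ρ₂ ^ (y'.1 - y'.2) * αst ^ y'.2 * dst m')) y m
          ≤ ρ₂ ^ (y.1 - y.2) * d₂ m
              + c₀ * (ρ₂ ^ (y.1 - y.2) * αst ^ y.2 * dst m) := by
  have hρ0 : (0:ℝ) < ρ₂ := hα0.trans hαρ
  have hρne : ρ₂ ≠ 0 := ne_of_gt hρ0
  have hαne : αst ≠ 0 := ne_of_gt hα0
  have hrat : (0:ℝ) < ρ₂ / αst - 1 := by
    have : (1:ℝ) < ρ₂ / αst := (one_lt_div hα0).mpr hαρ
    linarith
  set f : M → ℝ := fun m => (1 - ρ₂) * d₂ m / ((ρ₂ / αst - 1) * dst m) with hf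
  have hfpos : ∀ m, 0 < f m := fun m =>
    div_pos (mul_pos (by linarith) (hd₂ m)) (mul_pos hrat (hdst m))
  obtain ⟨m0⟩ := (inferInstance : Nonempty M)
  set c₀ := Finset.univ.sup' Finset.univ_nonempty f with hc₀def
  have hc₀pos : 0 < c₀ :=
    lt_of_lt_of_le (hfpos m0) (Finset.le_sup' f (Finset.mem_univ m0))
  have hc₀ : ∀ m, (1 - ρ₂) * d₂ m ≤ c₀ * ((ρ₂ / αst - 1) * dst m) := by
    intro m
    have h := Finset.le_sup' f (Finset.mem_univ m)
    rw [hc₀def]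
    exact (div_le_iff₀ (mul_pos hrat (hdst m))).mp h
  refine ⟨c₀, hc₀pos, ?_⟩
  intro y m hy2
  have E1 := interior_eq P lam mu1 mu2 ρ₂ 1 hρne one_ne_zero d₂ heig2 y m
  simp only [one_zpow, mul_one] at E1
  have E2 := interior_eq P lam mu1 mu2 ρ₂ αst hρne hαne dst heigst y m
  have hsum : (∑ m' : M, if m' = m then 0 else
        P m m' * (ρ₂ ^ (y.1 - y.2) * d₂ m' + c₀ * (ρ₂ ^ (y.1 - y.2) * αst ^ y.2 * dst m')))
      = (∑ m' : M, if m' = m then 0 else P m m' * (ρ₂ ^ (y.1 - y.2) * d₂ m'))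
        + c₀ * ∑ m' : M, (if m' = m then 0 else
            P m m' * (ρ₂ ^ (y.1 - y.2) * αst ^ y.2 * dst m')) := by
    rw [Finset.mul_sum, ← Finset.sum_add_distrib]
    exact Finset.sum_congr rfl fun j _ => by split <;> ring
  have Ecomb : (∑ m' : M, if m' = m then 0 else
        P m m' * (ρ₂ ^ (y.1 - y.2) * d₂ m' + c₀ * (ρ₂ ^ (y.1 - y.2) * αst ^ y.2 * dst m')))
      + P m m * (lam m * (ρ₂ ^ (y.1 - 1 - y.2) * d₂ m
            + c₀ * (ρ₂ ^ (y.1 - 1 - y.2) * αst ^ y.2 * dst m))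
        + mu1 m * (ρ₂ ^ (y.1 + 1 - (y.2 + 1)) * d₂ m
            + c₀ * (ρ₂ ^ (y.1 + 1 - (y.2 + 1)) * αst ^ (y.2 + 1) * dst m))
        + mu2 m * (ρ₂ ^ (y.1 - (y.2 - 1)) * d₂ m
            + c₀ * (ρ₂ ^ (y.1 - (y.2 - 1)) * αst ^ (y.2 - 1) * dst m)))
      = ρ₂ ^ (y.1 - y.2) * d₂ m + c₀ * (ρ₂ ^ (y.1 - y.2) * αst ^ y.2 * dst m) := by
    rw [hsum]
    linear_combination E1 + c₀ * E2
  simp only [stepExpR]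
  by_cases hy : y.2 = 0
  · rw [if_pos hy]
    have hC : ρ₂ ^ (y.1 - y.2) * d₂ m + c₀ * (ρ₂ ^ (y.1 - y.2) * αst ^ y.2 * dst m)
        ≤ ρ₂ ^ (y.1 - (y.2 - 1)) * d₂ m
          + c₀ * (ρ₂ ^ (y.1 - (y.2 - 1)) * αst ^ (y.2 - 1) * dst m) := by
      rw [hy]
      rw [show y.1 - (0:ℤ) = y.1 by ring, show y.1 - ((0:ℤ) - 1) = y.1 + 1 by ring,
        zpow_add_one₀ hρne, zpow_zero, show (0:ℤ) - 1 = -1 by ring, zpow_neg_one]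
      have ht : (0:ℝ) < ρ₂ ^ y.1 := zpow_pos hρ0 _
      have hkm := hc₀ m
      rw [div_eq_mul_inv] at hkm
      have := mul_le_mul_of_nonneg_left hkm ht.le
      linarith [this]
    have hmu2 : 0 ≤ mu2 m := (hrates m).2.2.1.le
    have hstep := mul_le_mul_of_nonneg_left (mul_le_mul_of_nonneg_left hC hmu2) (hP0 m m)
    linarith [Ecomb, hstep]
  · rw [if_neg hy]
    exact le_of_eq Ecomb
end
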